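/- If n is a perfect number, then KL(n) ≥ (2·φ(n) − n)²/(2n). -/

import Mathlib

/-- `KL n = ∑_{d ∣ n} d · log (d / (2 φ(d)))`. -/
noncomputable def KL (n : ℕ) : ℝ :=
  ∑ d ∈ n.divisors, (d : ℝ) * Real.log ((d : ℝ) / (2 * (Nat.totient d : ℝ)))

/-! Both `d ↦ d / 2n` and `d ↦ φ(d) / n` are probability distributions on the divisors of a
perfect number `n` (by `∑_{d ∣ n} φ(d) = n`), and `KL(n)` is `2n` times their Kullback–Leibler
divergence. Coarsening to the two blocks `{n}` and the proper divisors can only decrease the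
divergence (log-sum inequality), and the binary divergence between `(1/2, 1/2)` and
`(φ(n)/n, 1 - φ(n)/n)` is bounded below through `log x ≥ 1 - 1/x`. -/

open Real Finset
open scoped Nat

lemma le_mul_log_div {f g c : ℝ} (hf : 0 ≤ f) (hg : 0 < g) (hc : 0 < c) :
    f * log c + f - c * g ≤ f * log (f / g) := by
  rcases hf.eq_or_lt with rfl | hf
  · simpa using (mul_pos hc hg).le
  have key := one_sub_inv_le_log_of_pos (show 0 < f / (c * g) by positivity)
  rw [log_div hf.ne' (by positivity), log_mul hc.ne' hg.ne', inv_div] at key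
  calc f * log c + f - c * g = f * log c + f * (1 - c * g / f) := by field_simp; ring
    _ ≤ f * log c + f * (log f - (log c + log g)) := by gcongr
    _ = f * log (f / g) := by rw [log_div hf.ne' hg.ne']; ring

/-- A form of the log-sum inequality: the choice `c = ∑ f / ∑ g` gives the usual one. -/
lemma le_sum_mul_log_div {ι : Type*} (s : Finset ι) {f g : ι → ℝ} {c : ℝ}
    (hf : ∀ i ∈ s, 0 ≤ f i) (hg : ∀ i ∈ s, 0 < g i) (hc : 0 < c) :
    (∑ i ∈ s, f i) * log c + ∑ i ∈ s, f i - c * ∑ i ∈ s, g i ≤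
      ∑ i ∈ s, f i * log (f i / g i) := by
  simp only [sum_mul, mul_sum, ← sum_add_distrib, ← sum_sub_distrib]
  exact sum_le_sum fun i hi ↦ le_mul_log_div (hf i hi) (hg i hi) hc

lemma sq_div_le_mul_log_add_mul_log {a s : ℝ} (ha : 0 < a) (has : a < s) :
    (2 * a - s) ^ 2 / s ≤ s * log (s / (2 * a)) + s * log (s / (2 * (s - a))) := by
  have hs : 0 < s := ha.trans has
  have hsa : 0 < s - a := sub_pos.2 has
  have key := one_sub_inv_le_log_of_pos (show 0 < s / (2 * a) * (s / (2 * (s - a))) by positivity)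
  rw [log_mul (by positivity) (by positivity)] at key
  calc (2 * a - s) ^ 2 / s = s * (1 - (s / (2 * a) * (s / (2 * (s - a))))⁻¹) := by
        field_simp; ring
    _ ≤ s * (log (s / (2 * a)) + log (s / (2 * (s - a)))) := by gcongr
    _ = _ := mul_add _ _ _

lemma Nat.sum_properDivisors_totient_add_totient (n : ℕ) (hn : n ≠ 0) :
    ∑ d ∈ n.properDivisors, φ d + φ n = n := by
  rw [add_comm, ← sum_cons Nat.self_notMem_properDivisors, Nat.cons_self_properDivisors hn,
    Nat.sum_totient]

lemma Nat.Perfect.one_lt {n : ℕ} (h : n.Perfect) : 1 < n := by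
  obtain ⟨hsum, hn⟩ := h
  by_contra h1
  obtain rfl : n = 1 := by omega
  simp at hsum

lemma KL_eq_add_sum_properDivisors (n : ℕ) (hn : n ≠ 0) :
    KL n = n * log (n / (2 * φ n)) +
      ∑ d ∈ n.properDivisors, (d : ℝ) * log (d / (2 * φ d)) := by
  rw [KL, ← Nat.cons_self_properDivisors hn, sum_cons]

-- Inside `Nat`, a bare `log` would mean `Nat.log`.
lemma Nat.Perfect.mul_log_le_sum_properDivisors {n : ℕ} (h : n.Perfect) :
    n * Real.log (n / (2 * (n - φ n))) ≤
      ∑ d ∈ n.properDivisors, (d : ℝ) * Real.log (d / (2 * φ d)) := by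
  have hφ : (φ n : ℝ) < n := by exact_mod_cast Nat.totient_lt n h.one_lt
  have hsum_d : ∑ d ∈ n.properDivisors, (d : ℝ) = n := by rw [← Nat.cast_sum, h.1]
  have hsum_φ : ∑ d ∈ n.properDivisors, 2 * (φ d : ℝ) = 2 * (n - φ n) := by
    rw [← mul_sum]
    congr 1
    refine eq_sub_of_add_eq ?_
    exact_mod_cast Nat.sum_properDivisors_totient_add_totient n h.2.ne'
  have hc : 0 < (n : ℝ) / (2 * (n - φ n)) := by
    have : (0 : ℝ) < n - φ n := sub_pos.2 hφ
    have : (0 : ℝ) < n := by exact_mod_cast h.2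
    positivity
  have := le_sum_mul_log_div n.properDivisors (f := fun d ↦ (d : ℝ))
    (g := fun d ↦ 2 * (φ d : ℝ))
    (fun d _ ↦ Nat.cast_nonneg d) (fun d hd ↦ by
      have := Nat.totient_pos.2 (Nat.pos_of_mem_properDivisors hd)
      positivity) hc
  rwa [hsum_d, hsum_φ, div_mul_cancel₀ _ (by linarith), add_sub_cancel_right] at this

theorem KL_pinsker_bound_perfect (n : ℕ) (hn : 0 < n)
    (hperfect : ∑ d ∈ n.divisors, d = 2 * n) :
    KL n ≥ (2 * (Nat.totient n : ℝ) - n) ^ 2 / (2 * n) := by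
  have hP : n.Perfect := (Nat.perfect_iff_sum_divisors_eq_two_mul hn).2 hperfect
  have hφ : (0 : ℝ) < φ n := by exact_mod_cast Nat.totient_pos.2 hn
  have hφn : (φ n : ℝ) < n := by exact_mod_cast Nat.totient_lt n hP.one_lt
  calc (2 * (φ n : ℝ) - n) ^ 2 / (2 * n) ≤ (2 * φ n - n) ^ 2 / n :=
        div_le_div_of_nonneg_left (sq_nonneg _) (by positivity) (by linarith)
    _ ≤ n * log (n / (2 * φ n)) + n * log (n / (2 * (n - φ n))) :=
        sq_div_le_mul_log_add_mul_log hφ hφn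
    _ ≤ KL n := by
        rw [KL_eq_add_sum_properDivisors n hn.ne']
        exact add_le_add_right hP.mul_log_le_sum_properDivisors _
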